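/- arXiv:2411.04988 — 2 statements merged into one kernel-verified Lean document; each statement's English description precedes it below -/
import Mathlib

section
/- Let G = (V,E) be a connected locally finite graph. For every x ∈ V, every integer n ≥ 0, and every real t > 1, E_x[ G_t(X_0,X_n) / P^n(X_0,X_n) ] ≤ t + 1, where the expectation is over the lazy random walk started at x (note P^n(X_0,X_n) > 0 almost surely since the walk is lazy). -/
open scoped Classical BigOperators

namespace LazyRW

variable {V : Type*}

/-- One-step transition kernel of the lazy simple random walk. -/
noncomputable def step (G : SimpleGraph V) [G.LocallyFinite] (x y : V) : ℝ :=
  if x = y then 1/2 else if G.Adj x y then 1 / (2 * (G.degree x)) else 0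

/-- Probability of a given path of length `n` for the lazy walk started at `x`. -/
noncomputable def pathProb (G : SimpleGraph V) [G.LocallyFinite]
    (n : ℕ) (x : V) (p : Fin (n+1) → V) : ℝ :=
  (if p 0 = x then 1 else 0) * ∏ i : Fin n, step G (p i.castSucc) (p i.succ)

/-- Probability of an event determined by the first `n` steps of the lazy walk started at `x`. -/
noncomputable def walkProb (G : SimpleGraph V) [G.LocallyFinite]
    (n : ℕ) (x : V) (E : Set (Fin (n+1) → V)) : ℝ :=
  ∑' p : (Fin (n+1) → V), pathProb G n x p * E.indicator (fun _ => (1:ℝ)) p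

/-- Expectation of a functional of the first `n` steps of the lazy walk started at `x`. -/
noncomputable def walkExp (G : SimpleGraph V) [G.LocallyFinite]
    (n : ℕ) (x : V) (f : (Fin (n+1) → V) → ℝ) : ℝ :=
  ∑' p : (Fin (n+1) → V), pathProb G n x p * f p

/-- `n`-th power of the lazy transition matrix. -/
noncomputable def Pmat (G : SimpleGraph V) [G.LocallyFinite] : ℕ → V → V → ℝ
  | 0, x, y => if x = y then 1 else 0
  | (n+1), x, y => ∑' z, Pmat G n x z * step G z y

/-- Total variation profile `TV_n`. -/
noncomputable def TV (G : SimpleGraph V) [G.LocallyFinite] (n : ℕ) : ℝ :=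
  ⨆ e : {p : V × V // G.Adj p.1 p.2},
    (1/2) * ∑' z, |Pmat G n e.val.1 z - Pmat G n e.val.2 z|

/-- Expected graph-distance displacement at time `m`. -/
noncomputable def expDist (G : SimpleGraph V) [G.LocallyFinite] (m : ℕ) (x : V) : ℝ :=
  walkExp G m x (fun p => (G.dist (p 0) (p (Fin.last m)) : ℝ))

/-- `D_n^*`: supremal expected displacement up to time `n`. -/
noncomputable def Dstar (G : SimpleGraph V) [G.LocallyFinite] (n : ℕ) : ℝ :=
  ⨆ x : V, ⨆ m : Fin (n+1), expDist G m.1 x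

/-- Entropy of the walk at time `m` started at `x`. -/
noncomputable def entropy (G : SimpleGraph V) [G.LocallyFinite] (m : ℕ) (x : V) : ℝ :=
  ∑' y : V, Real.negMulLog (Pmat G m x y)

/-- `H_n^*`: supremal entropy up to time `n`. -/
noncomputable def Hstar (G : SimpleGraph V) [G.LocallyFinite] (n : ℕ) : ℝ :=
  ⨆ x : V, ⨆ m : Fin (n+1), entropy G m.1 x

/-- `|∂W|`: the number of edges with exactly one endpoint in `W`. -/
noncomputable def boundaryCard (G : SimpleGraph V) [G.LocallyFinite] (W : Finset V) : ℕ :=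
  ∑ w ∈ W, ((G.neighborFinset w).filter (fun z => z ∉ W)).card

/-- `deg(W)`: the sum of degrees of vertices in `W`. -/
noncomputable def degSum (G : SimpleGraph V) [G.LocallyFinite] (W : Finset V) : ℕ :=
  ∑ w ∈ W, G.degree w

/-- The isoperimetric profile `Φ(n)`. -/
noncomputable def isoProfile (G : SimpleGraph V) [G.LocallyFinite] (n : ℕ) : ℝ :=
  ⨅ W : {W : Finset V // W.Nonempty ∧ degSum G W ≤ n},
    (boundaryCard G W.1 : ℝ) / (degSum G W.1 : ℝ)

/-- `q_m(u,v)`: probability that the lazy walk started at `u` first visits `v` at time `m`. -/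
noncomputable def firstHit (G : SimpleGraph V) [G.LocallyFinite] (m : ℕ) (u v : V) : ℝ :=
  walkProb G m u {p | p (Fin.last m) = v ∧ ∀ i : Fin (m+1), i ≠ Fin.last m → p i ≠ v}

/-- The massive Green function `G_t(u,v)`. -/
noncomputable def greenT (G : SimpleGraph V) [G.LocallyFinite] (t : ℝ) (u v : V) : ℝ :=
  ∑' m : ℕ, (t/(t+1))^m * firstHit G m u v

/-
Grouping the paths by their endpoint `y`, the paths ending at `y` carry mass at most `P^n(x,y)`,
so the expectation is at most `∑_y P^n(x,y) · G_t(x,y) / P^n(x,y) ≤ ∑_y G_t(x,y)`.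
Since `q_m(x,y) ≤ P^m(x,y)` and the rows of `P^m` sum to at most one,
`∑_y G_t(x,y) ≤ ∑_m (t/(t+1))^m = t + 1`.
-/

theorem _root_.Finset.sum_mul_comp_le_of_sum_fiber_le {α β : Type*} [DecidableEq β]
    (S : Finset α) (π : α → β) (f : α → ℝ) (g M : β → ℝ)
    (hg : ∀ y ∈ S.image π, 0 ≤ g y)
    (hM : ∀ y ∈ S.image π, ∑ a ∈ S with π a = y, f a ≤ M y) :
    ∑ a ∈ S, f a * g (π a) ≤ ∑ y ∈ S.image π, M y * g y := by
  rw [← Finset.sum_fiberwise_of_maps_to (fun a ha => Finset.mem_image_of_mem π ha)]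
  refine Finset.sum_le_sum fun y hy => ?_
  calc ∑ a ∈ S with π a = y, f a * g (π a)
      = (∑ a ∈ S with π a = y, f a) * g y := by
        rw [Finset.sum_mul]
        exact Finset.sum_congr rfl fun a ha => by rw [(Finset.mem_filter.1 ha).2]
    _ ≤ M y * g y := mul_le_mul_of_nonneg_right (hM y hy) (hg y hy)

section LazyWalk

variable (G : SimpleGraph V) [G.LocallyFinite]

lemma step_nonneg (x y : V) : 0 ≤ step G x y := by
  unfold step
  split_ifs <;> positivity

lemma step_eq_zero {x y : V} (hne : x ≠ y) (hadj : ¬ G.Adj x y) : step G x y = 0 := by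
  simp [step, hne, hadj]

lemma sum_step_le_one (x : V) (T : Finset V) : ∑ y ∈ T, step G x y ≤ 1 := by
  set N := insert x (G.neighborFinset x)
  have hx : x ∉ G.neighborFinset x := by simp
  have hnb : ∀ y ∈ G.neighborFinset x, step G x y = 1 / (2 * G.degree x) := fun y hy => by
    have hadj := (G.mem_neighborFinset x y).1 hy
    simp [step, G.ne_of_adj hadj, hadj]
  calc ∑ y ∈ T, step G x y
      ≤ ∑ y ∈ T ∪ N, step G x y :=
        Finset.sum_le_sum_of_subset_of_nonneg Finset.subset_union_left
          fun y _ _ => step_nonneg G x y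
    _ = ∑ y ∈ N, step G x y := by
        refine (Finset.sum_subset Finset.subset_union_right fun y _ hy => ?_).symm
        simp only [N, Finset.mem_insert, SimpleGraph.mem_neighborFinset, not_or] at hy
        exact step_eq_zero G (Ne.symm hy.1) hy.2
    _ = 1 / 2 + G.degree x * (1 / (2 * G.degree x)) := by
        rw [Finset.sum_insert hx, Finset.sum_congr rfl hnb, Finset.sum_const,
          SimpleGraph.card_neighborFinset_eq_degree, nsmul_eq_mul]
        simp [step]
    _ ≤ 1 := by
        rcases Nat.eq_zero_or_pos (G.degree x) with hd | hd
        · norm_num [hd]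
        · field_simp; norm_num

lemma Pmat_nonneg (n : ℕ) (x y : V) : 0 ≤ Pmat G n x y := by
  induction n generalizing y with
  | zero => simp only [Pmat]; split_ifs <;> norm_num
  | succ n ih => exact tsum_nonneg fun z => mul_nonneg (ih z) (step_nonneg G z y)

lemma summable_Pmat_mul_step (n : ℕ) (x y : V) :
    Summable fun z => Pmat G n x z * step G z y := by
  refine summable_of_ne_finset_zero (s := insert y (G.neighborFinset y)) fun z hz => ?_
  simp only [Finset.mem_insert, SimpleGraph.mem_neighborFinset, not_or] at hz
  rw [step_eq_zero G hz.1 fun h => hz.2 h.symm, mul_zero]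

lemma sum_Pmat_le_one (n : ℕ) (x : V) (T : Finset V) : ∑ y ∈ T, Pmat G n x y ≤ 1 := by
  induction n generalizing T with
  | zero =>
    simp only [Pmat, Finset.sum_ite_eq]
    split_ifs <;> norm_num
  | succ n ih =>
    have hsum : Summable (Pmat G n x) := summable_of_sum_le (Pmat_nonneg G n x) ih
    calc ∑ y ∈ T, Pmat G (n + 1) x y
        = ∑' z, Pmat G n x z * ∑ y ∈ T, step G z y := by
          simp only [Pmat, Finset.mul_sum]
          exact (Summable.tsum_finsetSum fun y _ => summable_Pmat_mul_step G n x y).symm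
      _ ≤ ∑' z, Pmat G n x z :=
          Summable.tsum_le_tsum
            (fun z => mul_le_of_le_one_right (Pmat_nonneg G n x z) (sum_step_le_one G z T))
            (by simpa only [Finset.mul_sum] using
              summable_sum fun y _ => summable_Pmat_mul_step G n x y)
            hsum
      _ ≤ 1 := hsum.tsum_le_of_sum_le ih

lemma Pmat_le_one (n : ℕ) (x y : V) : Pmat G n x y ≤ 1 := by
  simpa using sum_Pmat_le_one G n x {y}

lemma pathProb_nonneg (n : ℕ) (x : V) (p : Fin (n + 1) → V) : 0 ≤ pathProb G n x p :=
  mul_nonneg (by split_ifs <;> norm_num) (Finset.prod_nonneg fun _ _ => step_nonneg G _ _)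

lemma pathProb_eq_zero_of_ne {n : ℕ} {x : V} {p : Fin (n + 1) → V} (h : p 0 ≠ x) :
    pathProb G n x p = 0 := by
  simp [pathProb, h]

lemma pathProb_succ (n : ℕ) (x : V) (p : Fin (n + 2) → V) :
    pathProb G (n + 1) x p =
      pathProb G n x (Fin.init p) * step G (Fin.init p (Fin.last n)) (p (Fin.last (n + 1))) := by
  simp only [pathProb, Fin.prod_univ_castSucc, Fin.init, Fin.succ_castSucc, Fin.succ_last,
    Fin.castSucc_zero, mul_assoc]
  rfl

lemma sum_pathProb_le_Pmat (n : ℕ) (x y : V) (S : Finset (Fin (n + 1) → V))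
    (hS : ∀ p ∈ S, p (Fin.last n) = y) : ∑ p ∈ S, pathProb G n x p ≤ Pmat G n x y := by
  induction n generalizing y with
  | zero =>
    have hsub : S ⊆ {fun _ => y} := fun p hp => by
      rw [Finset.mem_singleton]
      funext i
      rw [Fin.fin_one_eq_zero i]
      exact hS p hp
    calc ∑ p ∈ S, pathProb G 0 x p
        ≤ ∑ p ∈ {fun _ => y}, pathProb G 0 x p :=
          Finset.sum_le_sum_of_subset_of_nonneg hsub fun p _ _ => pathProb_nonneg G 0 x p
      _ = Pmat G 0 x y := by
          simp only [Finset.sum_singleton, pathProb, Pmat, Finset.univ_eq_empty,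
            Finset.prod_empty, mul_one, @eq_comm _ y x]
  | succ n ih =>
    have hinj : Set.InjOn Fin.init (S : Set (Fin (n + 2) → V)) := fun p hp q hq h => by
      rw [← Fin.snoc_init_self p, ← Fin.snoc_init_self q, h, hS p hp, hS q hq]
    set Q := S.image Fin.init
    calc ∑ p ∈ S, pathProb G (n + 1) x p
        = ∑ q ∈ Q, pathProb G n x q * step G (q (Fin.last n)) y := by
          rw [Finset.sum_image hinj]
          exact Finset.sum_congr rfl fun p hp => by rw [pathProb_succ, hS p hp]
      _ ≤ ∑ z ∈ Q.image (· (Fin.last n)), Pmat G n x z * step G z y :=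
          Q.sum_mul_comp_le_of_sum_fiber_le _ _ _ _ (fun z _ => step_nonneg G z y)
            fun z _ => ih z _ fun q hq => (Finset.mem_filter.1 hq).2
      _ ≤ Pmat G (n + 1) x y :=
          (summable_Pmat_mul_step G n x y).sum_le_tsum _ fun z _ =>
            mul_nonneg (Pmat_nonneg G n x z) (step_nonneg G z y)

lemma sum_pathProb_mul_le_sum_Pmat_mul (n : ℕ) (x : V) (S : Finset (Fin (n + 1) → V))
    (g : V → ℝ) (hg : ∀ y, 0 ≤ g y) :
    ∑ p ∈ S, pathProb G n x p * g (p (Fin.last n))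
      ≤ ∑ y ∈ S.image (· (Fin.last n)), Pmat G n x y * g y :=
  S.sum_mul_comp_le_of_sum_fiber_le _ _ _ _ (fun y _ => hg y)
    fun y _ => sum_pathProb_le_Pmat G n x y _ fun _ hp => (Finset.mem_filter.1 hp).2

lemma firstHit_nonneg (m : ℕ) (x y : V) : 0 ≤ firstHit G m x y :=
  tsum_nonneg fun p => mul_nonneg (pathProb_nonneg G m x p)
    (Set.indicator_nonneg (fun _ _ => zero_le_one) p)

lemma firstHit_le_Pmat (m : ℕ) (x y : V) : firstHit G m x y ≤ Pmat G m x y := by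
  refine tsum_le_of_sum_le' (Pmat_nonneg G m x y) fun S => ?_
  simp only [Set.indicator_apply, mul_ite, mul_one, mul_zero, ← Finset.sum_filter]
  exact sum_pathProb_le_Pmat G m x y _ fun p hp => (Finset.mem_filter.1 hp).2.1

lemma greenT_nonneg {t : ℝ} (ht : 0 ≤ t) (x y : V) : 0 ≤ greenT G t x y :=
  tsum_nonneg fun m => mul_nonneg (by positivity) (firstHit_nonneg G m x y)

lemma sum_greenT_le {t : ℝ} (ht : 0 ≤ t) (x : V) (T : Finset V) :
    ∑ y ∈ T, greenT G t x y ≤ t + 1 := by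
  set r := t / (t + 1)
  have hr0 : 0 ≤ r := by positivity
  have hr1 : r < 1 := (div_lt_one (by linarith)).2 (by linarith)
  have hgeo : Summable (r ^ ·) := summable_geometric_of_lt_one hr0 hr1
  have hterm (y : V) : Summable fun m => r ^ m * firstHit G m x y :=
    hgeo.of_nonneg_of_le (fun m => mul_nonneg (pow_nonneg hr0 m) (firstHit_nonneg G m x y))
      fun m => mul_le_of_le_one_right (pow_nonneg hr0 m)
        ((firstHit_le_Pmat G m x y).trans (Pmat_le_one G m x y))
  calc ∑ y ∈ T, greenT G t x y
      = ∑' m, r ^ m * ∑ y ∈ T, firstHit G m x y := by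
        simp only [greenT, Finset.mul_sum]
        exact (Summable.tsum_finsetSum fun y _ => hterm y).symm
    _ ≤ ∑' m, r ^ m :=
        Summable.tsum_le_tsum
          (fun m => mul_le_of_le_one_right (pow_nonneg hr0 m)
            ((Finset.sum_le_sum fun y _ => firstHit_le_Pmat G m x y).trans
              (sum_Pmat_le_one G m x T)))
          (by simpa only [Finset.mul_sum] using summable_sum fun y _ => hterm y) hgeo
    _ = t + 1 := by
        rw [tsum_geometric_of_lt_one hr0 hr1, one_sub_div (by linarith : t + 1 ≠ 0)]
        simp

end LazyWalk

theorem statement11_general (V : Type) (G : SimpleGraph V) [G.LocallyFinite]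
    (x : V) (n : ℕ) (t : ℝ) (ht : 1 < t) :
    walkExp G n x
        (fun p => greenT G t (p 0) (p (Fin.last n)) / Pmat G n (p 0) (p (Fin.last n)))
      ≤ t + 1 := by
  have ht0 : 0 ≤ t := by linarith
  refine tsum_le_of_sum_le' (by linarith) fun S => ?_
  set ratio : V → ℝ := fun y => greenT G t x y / Pmat G n x y
  have hratio (y : V) : 0 ≤ ratio y :=
    div_nonneg (greenT_nonneg G ht0 x y) (Pmat_nonneg G n x y)
  have hstart (p : Fin (n + 1) → V) :
      pathProb G n x p * (greenT G t (p 0) (p (Fin.last n)) / Pmat G n (p 0) (p (Fin.last n)))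
        = pathProb G n x p * ratio (p (Fin.last n)) := by
    by_cases h : p 0 = x
    · rw [h]
    · simp only [pathProb_eq_zero_of_ne G h, zero_mul]
  -- `a / 0 = 0` makes this hold also when `P^n(x,y) = 0`.
  have hcancel (y : V) : Pmat G n x y * ratio y ≤ greenT G t x y := by
    rcases (Pmat_nonneg G n x y).eq_or_lt with h | h
    · simp [ratio, ← h, greenT_nonneg G ht0 x y]
    · exact (mul_div_cancel₀ _ h.ne').le
  calc ∑ p ∈ S, pathProb G n x p * _
      = ∑ p ∈ S, pathProb G n x p * ratio (p (Fin.last n)) :=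
        Finset.sum_congr rfl fun p _ => hstart p
    _ ≤ ∑ y ∈ S.image (· (Fin.last n)), Pmat G n x y * ratio y :=
        sum_pathProb_mul_le_sum_Pmat_mul G n x S ratio hratio
    _ ≤ ∑ y ∈ S.image (· (Fin.last n)), greenT G t x y :=
        Finset.sum_le_sum fun y _ => hcancel y
    _ ≤ t + 1 := sum_greenT_le G ht0 x _

/-- the expected ratio of the massive Green function to the transition
probability is at most `t + 1`. -/
theorem statement11 (V : Type) (G : SimpleGraph V) [G.LocallyFinite]
    (hconn : G.Connected) (x : V) (n : ℕ) (t : ℝ) (ht : 1 < t) :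
    walkExp G n x
        (fun p => greenT G t (p 0) (p (Fin.last n)) / Pmat G n (p 0) (p (Fin.last n)))
      ≤ t + 1 :=
  statement11_general V G x n t ht

end LazyRW
end

section
/- Let G = (V,E) be a locally finite graph, let F be a nonempty finite subset of V, and let (Ω, μ) be a probability space carrying, for each x ∈ V, a measurable random variable X_x : Ω → V (with V given the discrete σ-algebra). Let t ≥ 0 be such that μ(X_x ≠ X_y) ≤ t for every pair of adjacent vertices x ∼ y. For each x ∈ V define the random set [x] := { y ∈ F : X_y = X_x }. Then (1/deg(F)) · ∑_{x∈F} deg(x) · E[ |∂([x] ∩ F)| / deg([x] ∩ F) ] ≤ t + |∂F|/deg(F), where the expectation is over μ (note x ∈ [x] ∩ F for x ∈ F, so deg([x] ∩ F) ≥ 1, assuming every vertex of F has degree at least 1). -/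
/-!
Write `C` for the cell of `x` and `b(w)` for the number of neighbours of `w` outside its own cell,
so that `|∂C| = ∑_{w ∈ C} b(w)`. If every `x ∈ C` sends `deg x · b(w) / deg C` to each `w ∈ C`,
then `w` receives exactly `b(w)`; hence, for every `ω`, `∑_{x ∈ F} deg x · |∂[x]| / deg [x]` equals
`∑_{w ∈ F} b(w)`, which is `|∂F|` plus the number of ordered pairs of adjacent vertices of `F`
separated by `X`. There are at most `deg F` such pairs, each separated with probability at most
`t`.
-/

open scoped Classical BigOperators

namespace LazyRW

variable {V : Type*}

open MeasureTheory
open Finset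
open scoped ENNReal

section Cells

variable {V α : Type*}

-- The random set `[x]` of the statement is `cell F (X · ω) x`.
noncomputable def cell (F : Finset V) (ξ : V → α) (x : V) : Finset V :=
  F.filter (fun y => ξ y = ξ x)

theorem mem_cell {F : Finset V} {ξ : V → α} {x y : V} :
    y ∈ cell F ξ x ↔ y ∈ F ∧ ξ y = ξ x :=
  mem_filter

theorem self_mem_cell {F : Finset V} {ξ : V → α} {x : V} (hx : x ∈ F) : x ∈ cell F ξ x :=
  mem_cell.2 ⟨hx, rfl⟩

theorem cell_eq_of_mem {F : Finset V} {ξ : V → α} {x w : V} (hw : w ∈ cell F ξ x) :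
    cell F ξ w = cell F ξ x := by
  ext y
  simp only [mem_cell, (mem_cell.1 hw).2]

theorem sum_mul_div_sum_cell (F : Finset V) (ξ : V → α) {f g : V → ℝ}
    (hg : ∀ w ∈ F, 0 ≤ g w) (hfg : ∀ w ∈ F, g w = 0 → f w = 0) :
    ∑ x ∈ F, g x * ((∑ w ∈ cell F ξ x, f w) / ∑ w ∈ cell F ξ x, g w) = ∑ w ∈ F, f w := by
  calc ∑ x ∈ F, g x * ((∑ w ∈ cell F ξ x, f w) / ∑ w ∈ cell F ξ x, g w)
      = ∑ x ∈ F, ∑ w ∈ F,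
          if ξ w = ξ x then g x * (f w / ∑ v ∈ cell F ξ w, g v) else 0 := by
        refine sum_congr rfl fun x _ => ?_
        rw [← sum_filter, sum_div, mul_sum]
        exact sum_congr rfl fun w hw => by rw [cell_eq_of_mem hw]
    _ = ∑ w ∈ F, (f w / ∑ v ∈ cell F ξ w, g v) * ∑ x ∈ cell F ξ w, g x := by
        rw [sum_comm]
        refine sum_congr rfl fun w _ => ?_
        rw [mul_sum, ← sum_filter]
        exact sum_congr (filter_congr fun _ _ => eq_comm) fun _ _ => mul_comm _ _
    _ = ∑ w ∈ F, f w := by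
        refine sum_congr rfl fun w hw => ?_
        rcases eq_or_ne (∑ v ∈ cell F ξ w, g v) 0 with h | h
        · have hgw : g w = 0 := (sum_eq_zero_iff_of_nonneg fun v hv =>
            hg v (mem_cell.1 hv).1).1 h w (self_mem_cell hw)
          simp [hfg w hw hgw]
        · exact div_mul_cancel₀ _ h

variable (G : SimpleGraph V) [G.LocallyFinite]

theorem boundaryCard_cell (F : Finset V) (ξ : V → α) (x : V) :
    boundaryCard G (cell F ξ x) =
      ∑ w ∈ cell F ξ x, #{z ∈ G.neighborFinset w | z ∉ cell F ξ w} :=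
  sum_congr rfl fun w hw => by rw [cell_eq_of_mem hw]

theorem card_neighborFinset_filter_not_mem_cell (F : Finset V) (ξ : V → α) (w : V) :
    #{z ∈ G.neighborFinset w | z ∉ cell F ξ w} =
      #{z ∈ G.neighborFinset w | z ∉ F} + #{z ∈ G.neighborFinset w | z ∈ F ∧ ξ z ≠ ξ w} := by
  rw [← card_union_of_disjoint (disjoint_filter.2 fun _ _ h h' => h h'.1), ← filter_or]
  congr 1
  ext z
  simp only [mem_filter, mem_cell]
  tauto

theorem sum_degree_mul_boundaryCard_div_degSum_cell (F : Finset V) (ξ : V → α) :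
    ∑ x ∈ F, (G.degree x : ℝ) *
        ((boundaryCard G (cell F ξ x) : ℝ) / (degSum G (cell F ξ x) : ℝ)) =
      boundaryCard G F + ∑ w ∈ F, (#{z ∈ G.neighborFinset w | z ∈ F ∧ ξ z ≠ ξ w} : ℝ) := by
  simp only [boundaryCard_cell, degSum, Nat.cast_sum]
  rw [sum_mul_div_sum_cell F ξ (fun _ _ => Nat.cast_nonneg _)]
  · simp only [card_neighborFinset_filter_not_mem_cell, Nat.cast_add, sum_add_distrib,
      boundaryCard, Nat.cast_sum]
  · intro w _ hw
    have hle : #{z ∈ G.neighborFinset w | z ∉ cell F ξ w} ≤ G.degree w := card_filter_le _ _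
    rw [Nat.cast_eq_zero] at hw
    exact_mod_cast Nat.eq_zero_of_le_zero (hw ▸ hle)

end Cells


section Integral

variable {Ω : Type*} [MeasurableSpace Ω] {μ : Measure Ω}

theorem integral_le_toReal_lintegral_ofReal {f : Ω → ℝ} (hf : ∀ ω, 0 ≤ f ω) :
    ∫ ω, f ω ∂μ ≤ (∫⁻ ω, ENNReal.ofReal (f ω) ∂μ).toReal := by
  by_cases hfi : Integrable f μ
  · rw [integral_eq_lintegral_of_nonneg_ae (.of_forall hf) hfi.1]
  · rw [integral_undef hfi]
    exact ENNReal.toReal_nonneg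

theorem sum_lintegral_le_lintegral_sum {ι : Type*} (s : Finset ι) (f : ι → Ω → ℝ≥0∞) :
    ∑ i ∈ s, ∫⁻ ω, f i ω ∂μ ≤ ∫⁻ ω, ∑ i ∈ s, f i ω ∂μ := by
  classical
  induction s using Finset.induction with
  | empty => simp
  | insert a s ha ih =>
    simp only [sum_insert ha]
    exact (add_le_add_right ih _).trans (le_lintegral_add _ _)

/-- The summands need not be measurable: the integral of a non-integrable function is `0`. -/
theorem sum_integral_le_integral_of_sum_le {ι : Type*} {s : Finset ι} {f : ι → Ω → ℝ}
    {g : Ω → ℝ} (hf : ∀ i ∈ s, ∀ ω, 0 ≤ f i ω) (hg : Integrable g μ)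
    (hfg : ∀ ω, ∑ i ∈ s, f i ω ≤ g ω) :
    ∑ i ∈ s, ∫ ω, f i ω ∂μ ≤ ∫ ω, g ω ∂μ := by
  have hg_nonneg : ∀ ω, 0 ≤ g ω := fun ω => (sum_nonneg fun i hi => hf i hi ω).trans (hfg ω)
  have hg_fin := hg.lintegral_lt_top.ne
  have hf_le_g : ∀ i ∈ s, ∀ ω, f i ω ≤ g ω := fun i hi ω =>
    (single_le_sum (fun j hj => hf j hj ω) hi).trans (hfg ω)
  have hf_fin : ∀ i ∈ s, ∫⁻ ω, ENNReal.ofReal (f i ω) ∂μ ≠ ⊤ := fun i hi =>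
    ne_top_of_le_ne_top hg_fin (lintegral_mono fun ω => ENNReal.ofReal_le_ofReal (hf_le_g i hi ω))
  calc ∑ i ∈ s, ∫ ω, f i ω ∂μ
      ≤ ∑ i ∈ s, (∫⁻ ω, ENNReal.ofReal (f i ω) ∂μ).toReal :=
        sum_le_sum fun i hi => integral_le_toReal_lintegral_ofReal (hf i hi)
    _ = (∑ i ∈ s, ∫⁻ ω, ENNReal.ofReal (f i ω) ∂μ).toReal := (ENNReal.toReal_sum hf_fin).symm
    _ ≤ (∫⁻ ω, ENNReal.ofReal (g ω) ∂μ).toReal := by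
        refine ENNReal.toReal_mono hg_fin ((sum_lintegral_le_lintegral_sum s _).trans ?_)
        refine lintegral_mono fun ω => ?_
        rw [← ENNReal.ofReal_sum_of_nonneg fun i hi => hf i hi ω]
        exact ENNReal.ofReal_le_ofReal (hfg ω)
    _ = ∫ ω, g ω ∂μ := (integral_eq_lintegral_of_nonneg_ae (.of_forall hg_nonneg) hg.1).symm

end Integral

section Coupling

variable {V α Ω : Type*} [MeasurableSpace Ω] (G : SimpleGraph V) [G.LocallyFinite]
  (F : Finset V) {μ : Measure Ω} [IsProbabilityMeasure μ]

/-- The sets `{X z ≠ X w}` need not be measurable, so they are replaced by measurable hulls of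
the same measure. -/
theorem sum_degree_mul_integral_cell_le (X : V → Ω → α) {t : ℝ} (ht : 0 ≤ t)
    (hcoup : ∀ x y, G.Adj x y → μ.real {ω | X x ω ≠ X y ω} ≤ t) :
    ∑ x ∈ F, (G.degree x : ℝ) * ∫ ω, (boundaryCard G (cell F (X · ω) x) : ℝ) /
        (degSum G (cell F (X · ω) x) : ℝ) ∂μ ≤ boundaryCard G F + degSum G F * t := by
  set cut : V → V → Set Ω := fun w z => toMeasurable μ {ω | X z ω ≠ X w ω}
  have hcut : ∀ w z, MeasurableSet (cut w z) := fun _ _ => measurableSet_toMeasurable _ _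
  have hcard_le : ∀ ω w, (#{z ∈ G.neighborFinset w | z ∈ F ∧ X z ω ≠ X w ω} : ℝ) ≤
      ∑ z ∈ G.neighborFinset w with z ∈ F, (cut w z).indicator (1 : Ω → ℝ) ω := by
    intro ω w
    rw [← filter_filter, natCast_card_filter]
    refine sum_le_sum fun z _ => ?_
    split_ifs with h
    · rw [Set.indicator_of_mem (subset_toMeasurable _ _ h), Pi.one_apply]
    · exact Set.indicator_nonneg (fun _ _ => zero_le_one) _
  have hint : ∀ w z, Integrable ((cut w z).indicator (1 : Ω → ℝ)) μ := fun w z =>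
    (integrable_const 1).indicator (hcut w z)
  calc ∑ x ∈ F, (G.degree x : ℝ) * ∫ ω, (boundaryCard G (cell F (X · ω) x) : ℝ) /
        (degSum G (cell F (X · ω) x) : ℝ) ∂μ
      = ∑ x ∈ F, ∫ ω, (G.degree x : ℝ) * ((boundaryCard G (cell F (X · ω) x) : ℝ) /
        (degSum G (cell F (X · ω) x) : ℝ)) ∂μ := by
        simp only [integral_const_mul]
    _ ≤ ∫ ω, ((boundaryCard G F : ℝ) + ∑ w ∈ F, ∑ z ∈ G.neighborFinset w with z ∈ F,
          (cut w z).indicator (1 : Ω → ℝ) ω) ∂μ := by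
        refine sum_integral_le_integral_of_sum_le (fun x _ ω => by positivity) ?_ fun ω => ?_
        · exact (integrable_const _).add
            (integrable_finsetSum _ fun w _ => integrable_finsetSum _ fun z _ => hint w z)
        · rw [sum_degree_mul_boundaryCard_div_degSum_cell]
          exact add_le_add_right (sum_le_sum fun w _ => hcard_le ω w) _
    _ = boundaryCard G F + ∑ w ∈ F, ∑ z ∈ G.neighborFinset w with z ∈ F, μ.real (cut w z) := by
        rw [integral_add (integrable_const _)
            (integrable_finsetSum _ fun w _ => integrable_finsetSum _ fun z _ => hint w z),
          integral_const, probReal_univ, one_smul, integral_finsetSum _ fun w _ =>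
            integrable_finsetSum _ fun z _ => hint w z]
        refine congrArg _ (sum_congr rfl fun w _ => ?_)
        rw [integral_finsetSum _ fun z _ => hint w z]
        exact sum_congr rfl fun z _ => integral_indicator_one (hcut w z)
    _ ≤ boundaryCard G F + ∑ w ∈ F, ∑ z ∈ G.neighborFinset w with z ∈ F, t := by
        gcongr with w _ z hz
        rw [measureReal_def, measure_toMeasurable, ← measureReal_def]
        exact hcoup z w ((G.mem_neighborFinset w z).1 (mem_filter.1 hz).1).symm
    _ ≤ boundaryCard G F + degSum G F * t := by
        rw [degSum, Nat.cast_sum, sum_mul]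
        gcongr with w
        rw [sum_const, nsmul_eq_mul]
        gcongr
        exact_mod_cast card_filter_le _ _

end Coupling

theorem statement15_general (V : Type) (G : SimpleGraph V) [G.LocallyFinite]
    (F : Finset V)
    (Ω : Type) [MeasurableSpace Ω] (μ : Measure Ω) [IsProbabilityMeasure μ]
    (X : V → Ω → V)
    (t : ℝ) (ht : 0 ≤ t)
    (hcoup : ∀ x y : V, G.Adj x y → (μ {ω | X x ω ≠ X y ω}).toReal ≤ t) :
    (1 / (degSum G F : ℝ)) *
        ∑ x ∈ F, (G.degree x : ℝ) *
          ∫ ω, ((boundaryCard G ((F.filter (fun y => X y ω = X x ω)) ∩ F) : ℝ) /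
                 (degSum G ((F.filter (fun y => X y ω = X x ω)) ∩ F) : ℝ)) ∂μ
      ≤ t + (boundaryCard G F : ℝ) / (degSum G F : ℝ) := by
  have hcell : ∀ ω x, F.filter (fun y => X y ω = X x ω) ∩ F = cell F (X · ω) x :=
    fun _ _ => inter_eq_left.2 (filter_subset _ _)
  simp only [hcell]
  have hsum := sum_degree_mul_integral_cell_le G F X ht hcoup
  rcases (Nat.cast_nonneg (degSum G F) : (0 : ℝ) ≤ degSum G F).eq_or_lt with hD | hD
  · simpa [← hD] using ht
  calc (1 / (degSum G F : ℝ)) * ∑ x ∈ F, (G.degree x : ℝ) * ∫ ω,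
        (boundaryCard G (cell F (X · ω) x) : ℝ) / (degSum G (cell F (X · ω) x) : ℝ) ∂μ
      ≤ (1 / (degSum G F : ℝ)) * (boundaryCard G F + degSum G F * t) := by gcongr
    _ = t + (boundaryCard G F : ℝ) / (degSum G F : ℝ) := by field_simp; ring

/-- mass-transport bound on the expected boundary-to-volume ratio of the
cells of the random equivalence relation induced by a coupled family of random variables. -/
theorem statement15 (V : Type) (G : SimpleGraph V) [G.LocallyFinite]
    (F : Finset V) (hF : F.Nonempty) (hFdeg : ∀ v ∈ F, 1 ≤ G.degree v)
    (Ω : Type) [MeasurableSpace Ω] (μ : Measure Ω) [IsProbabilityMeasure μ]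
    (X : V → Ω → V) (hX : ∀ x : V, @Measurable Ω V _ ⊤ (X x))
    (t : ℝ) (ht : 0 ≤ t)
    (hcoup : ∀ x y : V, G.Adj x y → (μ {ω | X x ω ≠ X y ω}).toReal ≤ t) :
    (1 / (degSum G F : ℝ)) *
        ∑ x ∈ F, (G.degree x : ℝ) *
          ∫ ω, ((boundaryCard G ((F.filter (fun y => X y ω = X x ω)) ∩ F) : ℝ) /
                 (degSum G ((F.filter (fun y => X y ω = X x ω)) ∩ F) : ℝ)) ∂μ
      ≤ t + (boundaryCard G F : ℝ) / (degSum G F : ℝ) :=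
  statement15_general V G F Ω μ X t ht hcoup

end LazyRW
end
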